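/- arXiv:2206.10284 — 3 statements merged into one kernel-verified Lean document; each statement's English description precedes it below -/
import Mathlib

section
/- With $P = \frac{2^B}{\pi}\sin(\pi/2^B)$, $A_1 = \frac{20}{\delta \ln 10}(10^{\delta/40} - 10^{-\delta/40})$, and $A_2 = \frac{10}{\delta \ln 10}(10^{\delta/20} - 10^{-\delta/20})$, the quantity $1 - 2 P A_1 + A_2$ is nonnegative for all $B \geq 1$ and $\delta > 0$, and tends to $0$ as $B \to \infty$ and $\delta \to 0^+$. -/
open Real Filter

noncomputable def Pq (B : ℕ) : ℝ := 2 ^ B / π * Real.sin (π / 2 ^ B)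

noncomputable def A1 (δ : ℝ) : ℝ :=
  20 / (δ * Real.log 10) * ((10 : ℝ) ^ (δ/40) - (10 : ℝ) ^ (-(δ/40)))

noncomputable def A2 (δ : ℝ) : ℝ :=
  10 / (δ * Real.log 10) * ((10 : ℝ) ^ (δ/20) - (10 : ℝ) ^ (-(δ/20)))

/-!
With `t = δ log 10 / 40` and `x = π / 2 ^ B` one has `A₁ = sinh t / t`, `A₂ = sinh 2t / 2t` and
`P = sin x / x`; all three tend to `1`, which gives the limit. Since `P ≤ 1` and `A₁ ≥ 0`,
`1 - 2 P A₁ + A₂ ≥ 1 - 2 A₁ + A₂ = g t / t` with `g t = t - 2 sinh t + sinh t cosh t`, and `g` is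
increasing with `g 0 = 0` because `g' = (cosh - 1)² + sinh²`.
-/

open scoped Topology

theorem Monotone.div_self_nonneg_of_map_zero {α : Type*} [Field α] [LinearOrder α]
    [IsStrictOrderedRing α] {f : α → α} (hf : Monotone f) (h0 : f 0 = 0) (x : α) :
    0 ≤ f x / x := by
  rcases le_total 0 x with hx | hx
  · exact div_nonneg (h0 ▸ hf hx) hx
  · exact div_nonneg_of_nonpos (h0 ▸ hf hx) hx

namespace Real

theorem rpow_sub_rpow_neg {b : ℝ} (hb : 0 < b) (x : ℝ) :
    b ^ x - b ^ (-x) = 2 * sinh (log b * x) := by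
  rw [rpow_def_of_pos hb, rpow_def_of_pos hb, sinh_eq, mul_neg]
  ring

noncomputable def sinhc (x : ℝ) : ℝ := if x = 0 then 1 else sinh x / x

@[simp]
theorem sinhc_zero : sinhc 0 = 1 := by simp [sinhc]

theorem sinhc_of_ne_zero {x : ℝ} (hx : x ≠ 0) : sinhc x = sinh x / x := by simp [sinhc, hx]

theorem sinhc_eq_dslope : sinhc = dslope sinh 0 := by
  ext
  simp [dslope, Function.update_apply, sinhc, slope, div_eq_inv_mul]

@[fun_prop]
theorem continuous_sinhc : Continuous sinhc := by
  refine continuous_iff_continuousAt.mpr fun x ↦ ?_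
  rw [sinhc_eq_dslope]
  by_cases hx : x = 0
  · simp [hx]
  · rw [continuousAt_dslope_of_ne hx]
    fun_prop

theorem sinhc_nonneg (x : ℝ) : 0 ≤ sinhc x := by
  by_cases hx : x = 0
  · simp [hx]
  · rw [sinhc_of_ne_zero hx]
    exact sinh_strictMono.monotone.div_self_nonneg_of_map_zero sinh_zero x

theorem monotone_self_sub_two_mul_sinh_add_sinh_mul_cosh :
    Monotone fun t => t - 2 * sinh t + sinh t * cosh t := by
  have hderiv (t : ℝ) : HasDerivAt (fun t => t - 2 * sinh t + sinh t * cosh t)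
      (1 - 2 * cosh t + (cosh t * cosh t + sinh t * sinh t)) t :=
    ((hasDerivAt_id t).sub ((hasDerivAt_sinh t).const_mul 2)).add
      ((hasDerivAt_sinh t).mul (hasDerivAt_cosh t))
  refine monotone_of_deriv_nonneg (fun t => (hderiv t).differentiableAt) fun t => ?_
  rw [(hderiv t).deriv]
  nlinarith [sq_nonneg (cosh t - 1), sq_nonneg (sinh t)]

theorem one_sub_two_mul_sinhc_add_sinhc_two_mul_nonneg (t : ℝ) :
    0 ≤ 1 - 2 * sinhc t + sinhc (2 * t) := by
  by_cases ht : t = 0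
  · norm_num [ht]
  have h : 1 - 2 * sinhc t + sinhc (2 * t) = (t - 2 * sinh t + sinh t * cosh t) / t := by
    rw [sinhc_of_ne_zero ht, sinhc_of_ne_zero (mul_ne_zero two_ne_zero ht), sinh_two_mul]
    field_simp
  rw [h]
  exact monotone_self_sub_two_mul_sinh_add_sinh_mul_cosh.div_self_nonneg_of_map_zero (by simp) t

end Real

theorem Pq_eq_sinc (B : ℕ) : Pq B = sinc (π / 2 ^ B) := by
  rw [Pq, sinc_of_ne_zero (by positivity)]
  field_simp

theorem A1_eq_sinhc {δ : ℝ} (hδ : δ ≠ 0) : A1 δ = sinhc (log 10 / 40 * δ) := by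
  have : log 10 / 40 * δ ≠ 0 := by positivity
  rw [A1, rpow_sub_rpow_neg (by norm_num), sinhc_of_ne_zero this]
  ring_nf

theorem A2_eq_sinhc {δ : ℝ} (hδ : δ ≠ 0) : A2 δ = sinhc (2 * (log 10 / 40 * δ)) := by
  have : 2 * (log 10 / 40 * δ) ≠ 0 := by positivity
  rw [A2, rpow_sub_rpow_neg (by norm_num), sinhc_of_ne_zero this]
  ring_nf

theorem tendsto_pi_div_two_pow_atTop : Tendsto (fun B : ℕ => π / 2 ^ B) atTop (𝓝 0) := by
  simpa [div_eq_mul_inv, inv_pow] using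
    (tendsto_pow_atTop_nhds_zero_of_lt_one (r := (2 : ℝ)⁻¹) (by norm_num) (by norm_num)).const_mul π

/-- The degradation factor `1 - 2 P A₁ + A₂` is nonnegative for all `B ≥ 1`, `δ > 0`, and
tends to `0` as `B → ∞` and `δ → 0⁺`. -/
theorem degradation_factor_nonneg_and_tendsto_zero :
    (∀ B : ℕ, 1 ≤ B → ∀ δ : ℝ, 0 < δ → 0 ≤ 1 - 2 * Pq B * A1 δ + A2 δ) ∧
    Tendsto (fun p : ℕ × ℝ => 1 - 2 * Pq p.1 * A1 p.2 + A2 p.2)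
      (atTop ×ˢ nhdsWithin 0 (Set.Ioi 0)) (nhds 0) := by
  set D : ℝ × ℝ → ℝ := fun q => 1 - 2 * sinc q.1 * sinhc q.2 + sinhc (2 * q.2)
  have hD (B : ℕ) {δ : ℝ} (hδ : 0 < δ) :
      1 - 2 * Pq B * A1 δ + A2 δ = D (π / 2 ^ B, log 10 / 40 * δ) := by
    rw [Pq_eq_sinc, A1_eq_sinhc hδ.ne', A2_eq_sinhc hδ.ne']
  constructor
  · intro B _ δ hδ
    rw [hD B hδ]
    have hP := mul_nonneg (sinhc_nonneg (log 10 / 40 * δ))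
      (sub_nonneg.2 (sinc_le_one (π / 2 ^ B)))
    linarith [one_sub_two_mul_sinhc_add_sinhc_two_mul_nonneg (log 10 / 40 * δ)]
  · have hlim : Tendsto (fun p : ℕ × ℝ => (π / 2 ^ p.1, log 10 / 40 * p.2))
        (atTop ×ˢ 𝓝[>] 0) (𝓝 (0, 0)) := by
      refine (tendsto_pi_div_two_pow_atTop.comp tendsto_fst).prodMk_nhds ?_
      have : Tendsto (fun δ : ℝ => log 10 / 40 * δ) (𝓝 0) (𝓝 0) := by
        simpa using (continuous_const_mul (log 10 / 40)).tendsto 0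
      exact (this.mono_left nhdsWithin_le_nhds).comp tendsto_snd
    have hD0 : D (0, 0) = 0 := by norm_num [D]
    refine hD0 ▸ ((by fun_prop : Continuous D).tendsto (0, 0)).comp hlim |>.congr' ?_
    filter_upwards [tendsto_snd.eventually self_mem_nhdsWithin] with p hp
    exact (hD p.1 hp).symm
end

section
/- Let $Q = 10^{n_a/20} e^{-j n_p}$ with $n_a$ uniform on $[-\delta/2,\delta/2]$ and $n_p$ uniform on $[-\pi/2^B, \pi/2^B]$, independent. Then $\mathbb{E}[|1 - Q|^2] = 1 - 2 P A_1 + A_2$, where $P, A_1, A_2$ are defined as $P = \frac{2^B}{\pi}\sin(\pi/2^B)$, $A_1 = \frac{20}{\delta\ln 10}(10^{\delta/40}-10^{-\delta/40})$, $A_2 = \frac{10}{\delta\ln 10}(10^{\delta/20}-10^{-\delta/20})$. -/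
/-! For a fixed amplitude `r`, `|1 - r e^{-ip}|² = 1 - 2 r cos p + r²`, so averaging over the
phase on `[-c, c]` leaves `1 + r² - 2 r (sin c / c)`. With `r = 10^{a/20}` we have
`r² = 10^{a/10}`, and both powers of `10` integrate in closed form over the amplitude interval. -/

open Real MeasureTheory intervalIntegral

theorem Complex.normSq_one_sub_ofReal_mul_exp_neg_I_mul (r p : ℝ) :
    Complex.normSq (1 - (r : ℂ) * Complex.exp (-(Complex.I * p))) =
      1 - 2 * r * Real.cos p + r ^ 2 := by
  rw [show -(Complex.I * p) = ((-p : ℝ) : ℂ) * Complex.I by push_cast; ring, Complex.exp_mul_I]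
  simp [Complex.normSq_apply, Complex.cos_ofReal_re, Complex.sin_ofReal_re]
  nlinarith [Real.sin_sq_add_cos_sq p]

theorem integral_normSq_one_sub_ofReal_mul_exp_neg_I_mul (r c : ℝ) :
    ∫ p in (-c)..c, Complex.normSq (1 - (r : ℂ) * Complex.exp (-(Complex.I * p))) =
      2 * c + 2 * c * r ^ 2 - 4 * Real.sin c * r := by
  simp only [Complex.normSq_one_sub_ofReal_mul_exp_neg_I_mul]
  rw [intervalIntegral.integral_add (intervalIntegrable_const.sub (intervalIntegrable_cos.const_mul _))
      intervalIntegrable_const,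
    intervalIntegral.integral_sub intervalIntegrable_const (intervalIntegrable_cos.const_mul _),
    intervalIntegral.integral_const_mul, integral_cos, Real.sin_neg]
  simp only [intervalIntegral.integral_const, smul_eq_mul]
  ring

theorem integral_const_rpow_div {b : ℝ} (hb₀ : 0 < b) (hb₁ : b ≠ 1) {s : ℝ} (hs : s ≠ 0)
    (x₁ x₂ : ℝ) :
    ∫ x in x₁..x₂, b ^ (x / s) = s / Real.log b * (b ^ (x₂ / s) - b ^ (x₁ / s)) := by
  have hm : Real.log b / s ≠ 0 := div_ne_zero (Real.log_ne_zero_of_pos_of_ne_one hb₀ hb₁) hs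
  have hpow : ∀ x : ℝ, b ^ (x / s) = Real.exp (Real.log b / s * x) := fun x => by
    rw [rpow_def_of_pos hb₀]; ring_nf
  simp only [hpow, integral_comp_mul_left (fun x => Real.exp x) hm, integral_exp, smul_eq_mul]
  field_simp

theorem expected_one_minus_Q_sq_general (δ : ℝ) (hδ : 0 < δ) (B : ℕ) :
    (δ⁻¹ * (2 * π / 2 ^ B)⁻¹) *
        ∫ a in (-(δ/2))..(δ/2), ∫ p in (-(π / 2 ^ B))..(π / 2 ^ B),
          Complex.normSq
            (1 - (((10 : ℝ) ^ (a / 20) : ℝ) : ℂ) * Complex.exp (-(Complex.I * p))) =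
      1 - 2 * (2 ^ B / π * Real.sin (π / 2 ^ B)) *
          (20 / (δ * Real.log 10) * ((10 : ℝ) ^ (δ/40) - (10 : ℝ) ^ (-(δ/40)))) +
        10 / (δ * Real.log 10) * ((10 : ℝ) ^ (δ/20) - (10 : ℝ) ^ (-(δ/20))) := by
  have hsq : ∀ a : ℝ, ((10 : ℝ) ^ (a / 20)) ^ 2 = (10 : ℝ) ^ (a / 10) := fun a => by
    rw [← rpow_mul_natCast (by norm_num)]; ring_nf
  have hpow_integrable : ∀ s : ℝ,
      IntervalIntegrable (fun a : ℝ => (10 : ℝ) ^ (a / s)) volume (-(δ/2)) (δ/2) :=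
    fun s => Continuous.intervalIntegrable (by fun_prop (disch := norm_num)) _ _
  simp only [integral_normSq_one_sub_ofReal_mul_exp_neg_I_mul, hsq]
  rw [intervalIntegral.integral_sub
      (intervalIntegrable_const.add ((hpow_integrable 10).const_mul _))
      ((hpow_integrable 20).const_mul _),
    intervalIntegral.integral_add intervalIntegrable_const ((hpow_integrable 10).const_mul _),
    intervalIntegral.integral_const, smul_eq_mul, intervalIntegral.integral_const_mul,
    intervalIntegral.integral_const_mul,
    integral_const_rpow_div (by norm_num) (by norm_num) (by norm_num),
    integral_const_rpow_div (by norm_num) (by norm_num) (by norm_num)]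
  have hlog : Real.log 10 ≠ 0 := by positivity
  norm_num only [neg_div, div_div]
  field_simp
  ring

/-- Per-tap irreducible residual power: with `Q = 10^{n_a/20} e^{-j n_p}`, independent `n_a`
uniform on `[-δ/2, δ/2]` and `n_p` uniform on `[-π/2^B, π/2^B]`,
`𝔼[|1 - Q|²] = 1 - 2 P A₁ + A₂` (expectation written as averaged double integral). -/
theorem expected_one_minus_Q_sq (δ : ℝ) (hδ : 0 < δ) (B : ℕ) (hB : 1 ≤ B) :
    (δ⁻¹ * (2 * π / 2 ^ B)⁻¹) *
        ∫ a in (-(δ/2))..(δ/2), ∫ p in (-(π / 2 ^ B))..(π / 2 ^ B),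
          Complex.normSq
            (1 - (((10 : ℝ) ^ (a / 20) : ℝ) : ℂ) * Complex.exp (-(Complex.I * p))) =
      1 - 2 * (2 ^ B / π * Real.sin (π / 2 ^ B)) *
          (20 / (δ * Real.log 10) * ((10 : ℝ) ^ (δ/40) - (10 : ℝ) ^ (-(δ/40)))) +
        10 / (δ * Real.log 10) * ((10 : ℝ) ^ (δ/20) - (10 : ℝ) ^ (-(δ/20))) :=
  expected_one_minus_Q_sq_general δ hδ B
end

section
/- Let $X[0], \dots, X[K-1]$ be i.i.d. complex random variables whose real and imaginary parts are independent, zero-mean, with variance $1/2$ each, and symmetric distributions (e.g., drawn from a QAM constellation). Define $N_{PA}[k] = \frac{\psi_3}{X[k] K}\sum_{m=0}^{K-1}\sum_{n=0}^{K-1} X[n] \overline{X[(n-m) \bmod K]}\, X[(k-m) \bmod K]$. Then $\mathbb{E}[N_{PA}[k]] = \frac{\psi_3 p_1 (2K-1)}{K}$, where $p_1 = \mathbb{E}[|X[k]|^2]$. -/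
open MeasureTheory ProbabilityTheory Complex Finset

set_option linter.unusedSectionVars false
set_option maxHeartbeats 1000000

section Helpers

variable {Ω : Type*} [MeasureSpace Ω] [IsProbabilityMeasure (volume : Measure Ω)]

/-- If `f ⟂ g`, `g` is integrable with mean zero, then `∫ f·g = 0` (junk-value friendly). -/
lemma pa_aux_L1 {f g : Ω → ℂ} (h : IndepFun f g volume) (hf : AEStronglyMeasurable f volume)
    (hgi : Integrable g) (hg0 : ∫ ω, g ω = 0) : ∫ ω, f ω * g ω = 0 := by
  by_cases hfg : Integrable (fun ω => f ω * g ω)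
  · have hgm : AEStronglyMeasurable g volume := hgi.1
    have hfr : AEMeasurable (fun ω => (f ω).re) volume :=
      Complex.measurable_re.comp_aemeasurable hf.aemeasurable
    have hfi : AEMeasurable (fun ω => (f ω).im) volume :=
      Complex.measurable_im.comp_aemeasurable hf.aemeasurable
    have hgr : AEMeasurable (fun ω => (g ω).re) volume :=
      Complex.measurable_re.comp_aemeasurable hgm.aemeasurable
    have hgim : AEMeasurable (fun ω => (g ω).im) volume :=
      Complex.measurable_im.comp_aemeasurable hgm.aemeasurable
    have hgr0 : ∫ ω, (g ω).re = 0 := by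
      have := integral_re (μ := (volume : Measure Ω)) hgi
      simp only [RCLike.re_to_complex] at this; rw [this, hg0]; simp
    have hgi0 : ∫ ω, (g ω).im = 0 := by
      have := integral_im (μ := (volume : Measure Ω)) hgi
      simp only [RCLike.im_to_complex] at this; rw [this, hg0]; simp
    have key : ∀ (u v : Ω → ℝ), IndepFun u v volume → AEMeasurable u volume →
        AEMeasurable v volume → (∫ ω, v ω) = 0 → ∫ ω, u ω * v ω = 0 := by
      intro u v huv hu hv hv0
      rw [huv.integral_fun_mul_eq_mul_integral hu.aestronglyMeasurable hv.aestronglyMeasurable, hv0, mul_zero]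
    have i1 : ∫ ω, (f ω).re * (g ω).re = 0 :=
      key _ _ (h.comp Complex.measurable_re Complex.measurable_re) hfr hgr hgr0
    have i2 : ∫ ω, (f ω).im * (g ω).im = 0 :=
      key _ _ (h.comp Complex.measurable_im Complex.measurable_im) hfi hgim hgi0
    have i3 : ∫ ω, (f ω).re * (g ω).im = 0 :=
      key _ _ (h.comp Complex.measurable_re Complex.measurable_im) hfr hgim hgi0
    have i4 : ∫ ω, (f ω).im * (g ω).re = 0 :=
      key _ _ (h.comp Complex.measurable_im Complex.measurable_re) hfi hgr hgr0
    have int1 : Integrable (fun ω => (f ω).re * (g ω).re) := by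
      refine Integrable.mono' hfg.norm (hfr.mul hgr).aestronglyMeasurable (ae_of_all _ fun ω => ?_)
      simp only [norm_mul, Real.norm_eq_abs, norm_norm, map_mul]
      exact mul_le_mul (Complex.abs_re_le_norm _) (Complex.abs_re_le_norm _) (abs_nonneg _)
        (norm_nonneg _)
    have int2 : Integrable (fun ω => (f ω).im * (g ω).im) := by
      refine Integrable.mono' hfg.norm (hfi.mul hgim).aestronglyMeasurable (ae_of_all _ fun ω => ?_)
      simp only [norm_mul, Real.norm_eq_abs, norm_norm, map_mul]
      exact mul_le_mul (Complex.abs_im_le_norm _) (Complex.abs_im_le_norm _) (abs_nonneg _)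
        (norm_nonneg _)
    have int3 : Integrable (fun ω => (f ω).re * (g ω).im) := by
      refine Integrable.mono' hfg.norm (hfr.mul hgim).aestronglyMeasurable (ae_of_all _ fun ω => ?_)
      simp only [norm_mul, Real.norm_eq_abs, norm_norm, map_mul]
      exact mul_le_mul (Complex.abs_re_le_norm _) (Complex.abs_im_le_norm _) (abs_nonneg _)
        (norm_nonneg _)
    have int4 : Integrable (fun ω => (f ω).im * (g ω).re) := by
      refine Integrable.mono' hfg.norm (hfi.mul hgr).aestronglyMeasurable (ae_of_all _ fun ω => ?_)
      simp only [norm_mul, Real.norm_eq_abs, norm_norm, map_mul]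
      exact mul_le_mul (Complex.abs_im_le_norm _) (Complex.abs_re_le_norm _) (abs_nonneg _)
        (norm_nonneg _)
    apply Complex.ext
    · have := integral_re (μ := (volume : Measure Ω)) hfg
      simp only [RCLike.re_to_complex] at this
      rw [← this]
      have h' : ∀ ω, (f ω * g ω).re = (f ω).re * (g ω).re - (f ω).im * (g ω).im :=
        fun ω => Complex.mul_re _ _
      simp only [h']
      rw [integral_sub int1 int2, i1, i2]; simp
    · have := integral_im (μ := (volume : Measure Ω)) hfg
      simp only [RCLike.im_to_complex] at this
      rw [← this]
      have h' : ∀ ω, (f ω * g ω).im = (f ω).re * (g ω).im + (f ω).im * (g ω).re :=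
        fun ω => Complex.mul_im _ _
      simp only [h']
      rw [integral_add int3 int4, i3, i4]; simp
  · exact integral_undef hfg

/-- `iIndepFun` transfers along a.e. equality. -/
lemma pa_aux_iIndep_ae {ι : Type*} [Countable ι] {X Y : ι → Ω → ℂ}
    (h : iIndepFun X volume)
    (hae : ∀ i, X i =ᵐ[volume] Y i) :
    iIndepFun Y volume := by
  rw [iIndepFun_iff_measure_inter_preimage_eq_mul] at h ⊢
  intro S sets H
  have hall : ∀ᵐ ω ∂(volume : Measure Ω), ∀ i, X i ω = Y i ω := ae_all_iff.2 hae
  have h1 : ∀ i, volume (Y i ⁻¹' sets i) = volume (X i ⁻¹' sets i) := by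
    intro i
    refine measure_congr ?_
    filter_upwards [hae i] with ω hω
    show (Y i ω ∈ sets i) = (X i ω ∈ sets i)
    rw [hω]
  have h2 : volume (⋂ i ∈ S, Y i ⁻¹' sets i) = volume (⋂ i ∈ S, X i ⁻¹' sets i) := by
    refine measure_congr ?_
    filter_upwards [hall] with ω hω
    show (ω ∈ ⋂ i ∈ S, Y i ⁻¹' sets i) = (ω ∈ ⋂ i ∈ S, X i ⁻¹' sets i)
    simp only [Set.mem_iInter, Set.mem_preimage, eq_iff_iff]
    exact ⟨fun h' i hi => by rw [hω i]; exact h' i hi, fun h' i hi => by rw [← hω i]; exact h' i hi⟩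
  rw [h2, h S H]
  exact (Finset.prod_congr rfl fun i _ => (h1 i).symm)

/-- A function of `Y a` is independent of any measurable function of the other coordinates. -/
lemma pa_aux_sep {K : ℕ} [NeZero K] {Y : Fin K → Ω → ℂ}
    (hind : iIndepFun Y volume)
    (hmeas : ∀ i, Measurable (Y i)) (a : Fin K) (F : ℂ → ℂ) (hF : Measurable F)
    (G : (Fin K → ℂ) → ℂ) (hG : Measurable G)
    (hGa : ∀ v w : Fin K → ℂ, (∀ i, i ≠ a → v i = w i) → G v = G w) :
    IndepFun (fun ω => F (Y a ω)) (fun ω => G (fun i => Y i ω)) volume := by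
  classical
  have hd : Disjoint ({a} : Finset (Fin K)) ({a}ᶜ : Finset (Fin K)) := disjoint_compl_right
  have h0 := hind.indepFun_finset {a} ({a}ᶜ) hd hmeas
  set φ₁ : (({a} : Finset (Fin K)) → ℂ) → ℂ := fun v => F (v ⟨a, Finset.mem_singleton_self a⟩)
  set φ₂ : ((({a}ᶜ : Finset (Fin K)) : Finset (Fin K)) → ℂ) → ℂ :=
    fun v => G (fun i => if h : i ∈ ({a}ᶜ : Finset (Fin K)) then v ⟨i, h⟩ else 0)
  have hφ₁ : Measurable φ₁ := hF.comp (measurable_pi_apply _)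
  have hφ₂ : Measurable φ₂ := by
    refine hG.comp (measurable_pi_lambda _ fun i => ?_)
    by_cases h : i ∈ ({a}ᶜ : Finset (Fin K))
    · simp only [h, dif_pos]; exact measurable_pi_apply _
    · simp only [h, dif_neg, not_false_iff]; exact measurable_const
  have := h0.comp hφ₁ hφ₂
  have e1 : (φ₁ ∘ fun ω (i : ({a} : Finset (Fin K))) => Y i ω) = fun ω => F (Y a ω) := rfl
  have e2 : (φ₂ ∘ fun ω (i : (({a}ᶜ : Finset (Fin K)) : Finset (Fin K))) => Y i ω)
      = fun ω => G (fun i => Y i ω) := by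
    funext ω
    refine hGa _ _ fun i hi => ?_
    have : i ∈ ({a}ᶜ : Finset (Fin K)) := by simpa [Finset.mem_compl] using hi
    simp only [Function.comp_apply, this, dif_pos]
  rwa [e1, e2] at this

end Helpers

/-- Lemma 1 (first moment) of the paper: for i.i.d. symmetric OFDM symbols `X[0],…,X[K-1]`
(independent real/imaginary parts, zero mean, variance `1/2` each, `X[k] ≠ 0` a.s.),
the PA-induced relative channel-estimation error
`N_PA[k] = (ψ₃ / (X[k] K)) ∑_m ∑_n X[n] conj(X[(n-m) mod K]) X[(k-m) mod K]`
has mean `ψ₃ p₁ (2K-1)/K`, where `p₁ = 𝔼[|X[k]|²]`. -/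
theorem pa_error_mean {Ωs : Type*} [MeasureSpace Ωs]
    [IsProbabilityMeasure (volume : Measure Ωs)]
    (K : ℕ) [NeZero K] (X : Fin K → Ωs → ℂ)
    (hindep : iIndepFun X volume)
    (hident : ∀ i j, IdentDistrib (X i) (X j) volume volume)
    (hReIm : ∀ i, IndepFun (fun ω => (X i ω).re) (fun ω => (X i ω).im) volume)
    (hReMean : ∀ i, ∫ ω, (X i ω).re = 0)
    (hImMean : ∀ i, ∫ ω, (X i ω).im = 0)
    (hReVar : ∀ i, ∫ ω, ((X i ω).re) ^ 2 = 1 / 2)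
    (hImVar : ∀ i, ∫ ω, ((X i ω).im) ^ 2 = 1 / 2)
    (hsymm : ∀ i, IdentDistrib (X i) (fun ω => -(X i ω)) volume volume)
    (hne : ∀ i, ∀ᵐ ω, X i ω ≠ 0)
    (ψ₃ : ℝ) (p₁ : ℝ)
    (hp₁ : ∀ i, ∫ ω, Complex.normSq (X i ω) = p₁)
    (NPA : Fin K → Ωs → ℂ)
    (hNPA : ∀ k ω, NPA k ω =
      (ψ₃ : ℂ) / (X k ω * K) *
        ∑ m : Fin K, ∑ n : Fin K,
          X n ω * (starRingEnd ℂ) (X (n - m) ω) * X (k - m) ω)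
    (hint : ∀ k, Integrable (NPA k)) :
    ∀ k, ∫ ω, NPA k ω = ((ψ₃ * p₁ * (2 * K - 1) / K : ℝ) : ℂ) := by
  classical
  have hXae : ∀ i, AEMeasurable (X i) volume := fun i => (hident i i).aemeasurable_fst
  set Y : Fin K → Ωs → ℂ := fun i => (hXae i).mk (X i) with hYdef
  have hYmeas : ∀ i, Measurable (Y i) := fun i => (hXae i).measurable_mk
  have hae : ∀ i, X i =ᵐ[volume] Y i := fun i => (hXae i).ae_eq_mk
  have hall : ∀ᵐ ω, ∀ i, X i ω = Y i ω := ae_all_iff.2 hae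
  have hYindep : iIndepFun Y volume := pa_aux_iIndep_ae hindep hae
  -- real/imaginary part integrability
  have hIntre2 : ∀ i, Integrable (fun ω => (Y i ω).re ^ 2) := by
    intro i
    have hX : Integrable (fun ω => (X i ω).re ^ 2) := by
      by_contra hc
      have := integral_undef hc
      rw [hReVar i] at this
      norm_num at this
    exact hX.congr ((hae i).mono fun ω h => by simp only [h])
  have hIntim2 : ∀ i, Integrable (fun ω => (Y i ω).im ^ 2) := by
    intro i
    have hX : Integrable (fun ω => (X i ω).im ^ 2) := by
      by_contra hc
      have := integral_undef hc
      rw [hImVar i] at this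
      norm_num at this
    exact hX.congr ((hae i).mono fun ω h => by simp only [h])
  have hYreVar : ∀ i, ∫ ω, (Y i ω).re ^ 2 = 1 / 2 := fun i => by
    rw [← hReVar i]; exact integral_congr_ae ((hae i).mono fun ω h => by simp only [h])
  have hYimVar : ∀ i, ∫ ω, (Y i ω).im ^ 2 = 1 / 2 := fun i => by
    rw [← hImVar i]; exact integral_congr_ae ((hae i).mono fun ω h => by simp only [h])
  have hYre0 : ∀ i, ∫ ω, (Y i ω).re = 0 := fun i => by
    rw [← hReMean i]; exact integral_congr_ae ((hae i).mono fun ω h => by simp only [h])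
  have hYim0 : ∀ i, ∫ ω, (Y i ω).im = 0 := fun i => by
    rw [← hImMean i]; exact integral_congr_ae ((hae i).mono fun ω h => by simp only [h])
  have hYReIm : ∀ i, IndepFun (fun ω => (Y i ω).re) (fun ω => (Y i ω).im) volume := fun i =>
    (hReIm i).congr ((hae i).mono fun ω h => by simp only [h]) ((hae i).mono fun ω h => by simp only [h])
  have hIntNormSq : ∀ i, Integrable (fun ω => Complex.normSq (Y i ω)) := by
    intro i
    have : (fun ω => Complex.normSq (Y i ω))
        = fun ω => (Y i ω).re ^ 2 + (Y i ω).im ^ 2 := by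
      funext ω; rw [Complex.normSq_apply]; ring
    rw [this]; exact (hIntre2 i).add (hIntim2 i)
  have hIntYre : ∀ i, Integrable (fun ω => (Y i ω).re) := by
    intro i
    refine Integrable.mono' ((integrable_const (1 : ℝ)).add (hIntre2 i))
      ((Complex.measurable_re.comp (hYmeas i)).aestronglyMeasurable) (ae_of_all _ fun ω => ?_)
    simp only [Real.norm_eq_abs, Pi.add_apply]
    rcases le_or_gt (|(Y i ω).re|) 1 with h | h
    · nlinarith [sq_nonneg ((Y i ω).re)]
    · nlinarith [_root_.sq_abs ((Y i ω).re)]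
  have hIntYim : ∀ i, Integrable (fun ω => (Y i ω).im) := by
    intro i
    refine Integrable.mono' ((integrable_const (1 : ℝ)).add (hIntim2 i))
      ((Complex.measurable_im.comp (hYmeas i)).aestronglyMeasurable) (ae_of_all _ fun ω => ?_)
    simp only [Real.norm_eq_abs, Pi.add_apply]
    rcases le_or_gt (|(Y i ω).im|) 1 with h | h
    · nlinarith [sq_nonneg ((Y i ω).im)]
    · nlinarith [_root_.sq_abs ((Y i ω).im)]
  have hIntY : ∀ i, Integrable (Y i) := by
    intro i
    refine Integrable.mono' ((hIntYre i).abs.add (hIntYim i).abs)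
      (hYmeas i).aestronglyMeasurable (ae_of_all _ fun ω => ?_)
    simp only [Pi.add_apply]
    calc ‖Y i ω‖ = ‖Y i ω‖ := rfl
      _ ≤ |(Y i ω).re| + |(Y i ω).im| := Complex.norm_le_abs_re_add_abs_im _
      _ = |(Y i ω).re| + |(Y i ω).im| := rfl
  have hIntY2 : ∀ i, Integrable (fun ω => Y i ω ^ 2) := by
    intro i
    refine Integrable.mono' (hIntNormSq i)
      (((hYmeas i).pow_const 2).aestronglyMeasurable) (ae_of_all _ fun ω => ?_)
    rw [norm_pow]
    calc ‖Y i ω‖ ^ 2 = Complex.normSq (Y i ω) := Complex.sq_norm _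
      _ ≤ Complex.normSq (Y i ω) := le_rfl
  have hIntconj : ∀ i, Integrable (fun ω => (starRingEnd ℂ) (Y i ω)) := by
    intro i
    refine Integrable.mono' (hIntY i).norm
      ((Complex.continuous_conj.measurable.comp (hYmeas i)).aestronglyMeasurable)
      (ae_of_all _ fun ω => ?_)
    simp
  have hY0 : ∀ i, ∫ ω, Y i ω = 0 := by
    intro i
    apply Complex.ext
    · have := integral_re (μ := (volume : Measure Ωs)) (hIntY i)
      simp only [RCLike.re_to_complex] at this
      rw [← this, hYre0 i]; simp
    · have := integral_im (μ := (volume : Measure Ωs)) (hIntY i)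
      simp only [RCLike.im_to_complex] at this
      rw [← this, hYim0 i]; simp
  have hYconj0 : ∀ i, ∫ ω, (starRingEnd ℂ) (Y i ω) = 0 := by
    intro i
    rw [integral_conj, hY0 i, map_zero]
  have hY20 : ∀ i, ∫ ω, Y i ω ^ 2 = 0 := by
    intro i
    have hIntreim : Integrable (fun ω => (Y i ω).re * (Y i ω).im) :=
      (hYReIm i).integrable_mul (hIntYre i) (hIntYim i)
    apply Complex.ext
    · have := integral_re (μ := (volume : Measure Ωs)) (hIntY2 i)
      simp only [RCLike.re_to_complex] at this
      rw [← this]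
      have h' : ∀ ω, (Y i ω ^ 2).re = (Y i ω).re ^ 2 - (Y i ω).im ^ 2 := by
        intro ω; rw [sq, Complex.mul_re]; ring
      simp only [h']
      rw [integral_sub (hIntre2 i) (hIntim2 i), hYreVar i, hYimVar i]; simp
    · have := integral_im (μ := (volume : Measure Ωs)) (hIntY2 i)
      simp only [RCLike.im_to_complex] at this
      rw [← this]
      have h' : ∀ ω, (Y i ω ^ 2).im = 2 * ((Y i ω).re * (Y i ω).im) := by
        intro ω; rw [sq, Complex.mul_im]; ring
      simp only [h']
      rw [integral_const_mul,
        (hYReIm i).integral_fun_mul_eq_mul_integral (hIntYre i).1 (hIntYim i).1, hYre0 i]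
      simp
  have hp₁Y : ∀ i, ∫ ω, Complex.normSq (Y i ω) = p₁ := fun i => by
    rw [← hp₁ i]; exact integral_congr_ae ((hae i).mono fun ω h => by simp only [h])
  have hKne : (K : ℂ) ≠ 0 := Nat.cast_ne_zero.mpr (NeZero.ne K)
  intro k
  by_cases hψ : ψ₃ = 0
  · subst hψ
    have : NPA k =ᵐ[volume] fun _ => (0 : ℂ) := by
      refine ae_of_all _ fun ω => ?_
      rw [hNPA k ω]; simp
    rw [integral_congr_ae this]; simp
  -- the decomposition
  set E0 : Finset (Fin K) := Finset.univ.erase 0 with hE0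
  set c : ℂ := (ψ₃ : ℂ) / (K : ℂ) with hc
  set g1 : Ωs → ℂ := fun ω => ∑ n : Fin K, ((Complex.normSq (Y n ω) : ℝ) : ℂ) with hg1def
  set g2 : Ωs → ℂ := fun ω => ∑ m ∈ E0, ((Complex.normSq (Y (k - m) ω) : ℝ) : ℂ) with hg2def
  set B : Ωs → ℂ := fun ω => ∑ m ∈ E0, Y (k + m) ω * Y (k - m) ω with hBdef
  set g3 : Ωs → ℂ := fun ω => (starRingEnd ℂ) (Y k ω) / Y k ω * B ω with hg3def
  set R2 : Ωs → ℂ := fun ω => ∑ m ∈ E0, ∑ n ∈ (Finset.univ.erase k).erase (k + m),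
      Y n ω * (starRingEnd ℂ) (Y (n - m) ω) * Y (k - m) ω with hR2def
  set g4 : Ωs → ℂ := fun ω => (Y k ω)⁻¹ * R2 ω with hg4def
  have hkm_ne : ∀ m : Fin K, m ∈ E0 → k + m ≠ k := by
    intro m hm h
    exact (Finset.ne_of_mem_erase hm) (by rwa [add_eq_left] at h)
  have hkm_ne' : ∀ m : Fin K, m ∈ E0 → k - m ≠ k := by
    intro m hm h
    exact (Finset.ne_of_mem_erase hm) (by rwa [sub_eq_self] at h)
  have hdecomp : NPA k =ᵐ[volume] fun ω => c * (g1 ω + g2 ω + g3 ω + g4 ω) := by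
    filter_upwards [hall, hne k] with ω hω hxne
    have hx : Y k ω ≠ 0 := fun h => hxne (by rw [hω k, h])
    rw [hNPA k ω]
    have hXY : ∀ m n : Fin K, X n ω * (starRingEnd ℂ) (X (n - m) ω) * X (k - m) ω
        = Y n ω * (starRingEnd ℂ) (Y (n - m) ω) * Y (k - m) ω := fun m n => by
      rw [hω, hω, hω]
    rw [Finset.sum_congr rfl fun m _ => Finset.sum_congr rfl fun n _ => hXY m n, hω k]
    have S_eq : ∑ m : Fin K, ∑ n : Fin K,
        Y n ω * (starRingEnd ℂ) (Y (n - m) ω) * Y (k - m) ω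
        = Y k ω * (g1 ω + g2 ω) + (starRingEnd ℂ) (Y k ω) * B ω + R2 ω := by
      have step0 : ∑ n : Fin K, Y n ω * (starRingEnd ℂ) (Y (n - 0) ω) * Y (k - 0) ω
          = Y k ω * g1 ω := by
        rw [hg1def, Finset.mul_sum]
        refine Finset.sum_congr rfl fun n _ => ?_
        rw [sub_zero, sub_zero, Complex.mul_conj]
        ring
      have step1 : ∀ m ∈ E0, ∑ n : Fin K, Y n ω * (starRingEnd ℂ) (Y (n - m) ω) * Y (k - m) ω
          = Y k ω * ((Complex.normSq (Y (k - m) ω) : ℝ) : ℂ)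
            + (starRingEnd ℂ) (Y k ω) * (Y (k + m) ω * Y (k - m) ω)
            + ∑ n ∈ (Finset.univ.erase k).erase (k + m),
                Y n ω * (starRingEnd ℂ) (Y (n - m) ω) * Y (k - m) ω := by
        intro m hm
        rw [← Finset.add_sum_erase _ _ (Finset.mem_univ k),
          ← Finset.add_sum_erase _ _
            (Finset.mem_erase.mpr ⟨hkm_ne m hm, Finset.mem_univ _⟩)]
        rw [add_sub_cancel_right]
        have e1 : Y k ω * (starRingEnd ℂ) (Y (k - m) ω) * Y (k - m) ω
            = Y k ω * ((Complex.normSq (Y (k - m) ω) : ℝ) : ℂ) := by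
          rw [mul_assoc, mul_comm ((starRingEnd ℂ) (Y (k - m) ω)), Complex.mul_conj]
        have e2 : Y (k + m) ω * (starRingEnd ℂ) (Y k ω) * Y (k - m) ω
            = (starRingEnd ℂ) (Y k ω) * (Y (k + m) ω * Y (k - m) ω) := by ring
        rw [e1, e2, add_assoc]
      rw [← Finset.add_sum_erase _ _ (Finset.mem_univ (0 : Fin K)), step0]
      rw [Finset.sum_congr rfl step1]
      rw [Finset.sum_add_distrib, Finset.sum_add_distrib]
      rw [hg2def, hBdef, hR2def, ← Finset.mul_sum, ← Finset.mul_sum]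
      ring
    rw [S_eq, hg3def, hg4def, hc]
    field_simp
  -- integrability of the pieces
  have hint_g1 : Integrable g1 :=
    integrable_finset_sum _ fun n _ => (hIntNormSq n).ofReal
  have hint_g2 : Integrable g2 :=
    integrable_finset_sum _ fun m _ => (hIntNormSq (k - m)).ofReal
  have hint_B : Integrable B := by
    refine integrable_finset_sum _ fun m hm => ?_
    by_cases h2m : k + m = k - m
    · have : (fun ω => Y (k + m) ω * Y (k - m) ω) = fun ω => Y (k + m) ω ^ 2 := by
        funext ω; rw [← h2m, sq]
      rw [this]; exact hIntY2 (k + m)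
    · have := (hYindep.indepFun h2m).integrable_mul (hIntY (k + m)) (hIntY (k - m))
      exact this
  have hB0 : ∫ ω, B ω = 0 := by
    rw [hBdef]
    rw [integral_finset_sum _ fun m hm => ?_]
    · refine Finset.sum_eq_zero fun m hm => ?_
      by_cases h2m : k + m = k - m
      · have : (fun ω => Y (k + m) ω * Y (k - m) ω) = fun ω => Y (k + m) ω ^ 2 := by
          funext ω; rw [← h2m, sq]
        rw [show ∫ ω, Y (k + m) ω * Y (k - m) ω = ∫ ω, Y (k + m) ω ^ 2 from by rw [this]]
        exact hY20 (k + m)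
      · exact pa_aux_L1 (hYindep.indepFun h2m) (hYmeas (k + m)).aestronglyMeasurable
          (hIntY (k - m)) (hY0 (k - m))
    · by_cases h2m : k + m = k - m
      · have : (fun ω => Y (k + m) ω * Y (k - m) ω) = fun ω => Y (k + m) ω ^ 2 := by
          funext ω; rw [← h2m, sq]
        rw [this]; exact hIntY2 (k + m)
      · exact (hYindep.indepFun h2m).integrable_mul (hIntY (k + m)) (hIntY (k - m))
  have hint_g3 : Integrable g3 := by
    refine hint_B.bdd_mul (c := 1) ?_ (ae_of_all _ fun ω => ?_)
    · exact ((Complex.continuous_conj.measurable.comp (hYmeas k)).div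
        (hYmeas k)).aestronglyMeasurable
    · rcases eq_or_ne (Y k ω) 0 with h | h
      · simp [h]
      · rw [norm_div]
        rw [div_le_one (by simpa [norm_pos_iff] using h)]
        simp
  have hg3_0 : ∫ ω, g3 ω = 0 := by
    have hindp : IndepFun (fun ω => (starRingEnd ℂ) (Y k ω) / Y k ω) B volume := by
      have := pa_aux_sep hYindep hYmeas k (fun z => (starRingEnd ℂ) z / z)
        (Complex.continuous_conj.measurable.div measurable_id)
        (fun v => ∑ m ∈ E0, v (k + m) * v (k - m))
        (Finset.measurable_sum _ fun m _ =>
          (measurable_pi_apply _).mul (measurable_pi_apply _))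
        (fun v w hvw => Finset.sum_congr rfl fun m hm => by
          rw [hvw _ (hkm_ne m hm), hvw _ (hkm_ne' m hm)])
      exact this
    exact pa_aux_L1 hindp
      (((Complex.continuous_conj.measurable.comp (hYmeas k)).div
        (hYmeas k)).aestronglyMeasurable) hint_B hB0
  -- per-term facts for R2
  have hterm : ∀ m ∈ E0, ∀ n ∈ (Finset.univ.erase k).erase (k + m),
      Integrable (fun ω => Y n ω * (starRingEnd ℂ) (Y (n - m) ω) * Y (k - m) ω)
      ∧ ∫ ω, Y n ω * (starRingEnd ℂ) (Y (n - m) ω) * Y (k - m) ω = 0 := by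
    intro m hm n hn
    have hm0 : m ≠ 0 := Finset.ne_of_mem_erase hm
    have hnkm : n ≠ k + m := Finset.ne_of_mem_erase hn
    have hnk : n ≠ k := Finset.ne_of_mem_erase (Finset.mem_of_mem_erase hn)
    have hnnm : n - m ≠ n := fun h => hm0 (by rwa [sub_eq_self] at h)
    by_cases hnc : n = k - m
    · -- term is Yn² · conj(Y (n-m))
      have hre : (fun ω => Y n ω * (starRingEnd ℂ) (Y (n - m) ω) * Y (k - m) ω)
          = fun ω => Y n ω ^ 2 * (starRingEnd ℂ) (Y (n - m) ω) := by
        funext ω; rw [← hnc]; ring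
      have hindp : IndepFun (fun ω => Y n ω ^ 2)
          (fun ω => (starRingEnd ℂ) (Y (n - m) ω)) volume := by
        have := (hYindep.indepFun hnnm.symm).comp
          (measurable_id.pow_const 2) Complex.continuous_conj.measurable
        exact this
      constructor
      · rw [hre]
        exact hindp.integrable_mul (hIntY2 n) (hIntconj (n - m))
      · rw [show ∫ ω, Y n ω * (starRingEnd ℂ) (Y (n - m) ω) * Y (k - m) ω
            = ∫ ω, Y n ω ^ 2 * (starRingEnd ℂ) (Y (n - m) ω) from by rw [hre]]
        exact pa_aux_L1 hindp ((hYmeas n).pow_const 2).aestronglyMeasurable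
          (hIntconj (n - m)) (hYconj0 (n - m))
    · -- all three indices distinct
      have hbc : n - m ≠ k - m := fun h => hnk (by
        have := sub_left_injective (G := Fin K) h
        exact sub_left_injective h)
      have hre : (fun ω => Y n ω * (starRingEnd ℂ) (Y (n - m) ω) * Y (k - m) ω)
          = fun ω => ((starRingEnd ℂ) (Y (n - m) ω) * Y (k - m) ω) * Y n ω := by
        funext ω; ring
      have hindp0 : IndepFun (Y n)
          (fun ω => (starRingEnd ℂ) (Y (n - m) ω) * Y (k - m) ω) volume := by
        have := pa_aux_sep hYindep hYmeas n (fun z => z) measurable_id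
          (fun v => (starRingEnd ℂ) (v (n - m)) * v (k - m))
          ((Complex.continuous_conj.measurable.comp (measurable_pi_apply _)).mul
            (measurable_pi_apply _))
          (fun v w hvw => by
            simp only [hvw _ hnnm, hvw _ (fun h => hnc h.symm)])
        exact this
      have hindp : IndepFun (fun ω => (starRingEnd ℂ) (Y (n - m) ω) * Y (k - m) ω)
          (Y n) volume := hindp0.symm
      have hprodint : Integrable (fun ω => (starRingEnd ℂ) (Y (n - m) ω) * Y (k - m) ω) := by
        have := (hYindep.indepFun hbc).comp Complex.continuous_conj.measurable measurable_id
        exact this.integrable_mul (hIntconj (n - m)) (hIntY (k - m))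
      constructor
      · rw [hre]
        exact hindp.integrable_mul hprodint (hIntY n)
      · rw [show ∫ ω, Y n ω * (starRingEnd ℂ) (Y (n - m) ω) * Y (k - m) ω
            = ∫ ω, ((starRingEnd ℂ) (Y (n - m) ω) * Y (k - m) ω) * Y n ω from by rw [hre]]
        exact pa_aux_L1 hindp hprodint.1 (hIntY n) (hY0 n)
  have hint_R2 : Integrable R2 :=
    integrable_finset_sum _ fun m hm =>
      integrable_finset_sum _ fun n hn => (hterm m hm n hn).1
  have hR20 : ∫ ω, R2 ω = 0 := by
    rw [hR2def, integral_finset_sum _ fun m hm =>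
      integrable_finset_sum _ fun n hn => (hterm m hm n hn).1]
    refine Finset.sum_eq_zero fun m hm => ?_
    rw [integral_finset_sum _ fun n hn => (hterm m hm n hn).1]
    exact Finset.sum_eq_zero fun n hn => (hterm m hm n hn).2
  have hg4_0 : ∫ ω, g4 ω = 0 := by
    have hindp : IndepFun (fun ω => (Y k ω)⁻¹) R2 volume := by
      have := pa_aux_sep hYindep hYmeas k (fun z => z⁻¹) (measurable_inv)
        (fun v => ∑ m ∈ E0, ∑ n ∈ (Finset.univ.erase k).erase (k + m),
          v n * (starRingEnd ℂ) (v (n - m)) * v (k - m))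
        (Finset.measurable_sum _ fun m _ => Finset.measurable_sum _ fun n _ =>
          ((measurable_pi_apply _).mul
            (Complex.continuous_conj.measurable.comp (measurable_pi_apply _))).mul
          (measurable_pi_apply _))
        (fun v w hvw => Finset.sum_congr rfl fun m hm => Finset.sum_congr rfl fun n hn => by
          have hnkm : n ≠ k + m := Finset.ne_of_mem_erase hn
          have hnk : n ≠ k := Finset.ne_of_mem_erase (Finset.mem_of_mem_erase hn)
          have hnmk : n - m ≠ k := fun h => hnkm (by rw [← h, sub_add_cancel])
          rw [hvw _ hnk, hvw _ hnmk, hvw _ (hkm_ne' m hm)])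
      exact this
    exact pa_aux_L1 hindp ((hYmeas k).inv.aestronglyMeasurable) hint_R2 hR20
  -- assemble
  have hcne : c ≠ 0 := div_ne_zero (Complex.ofReal_ne_zero.mpr hψ) hKne
  have hint_g4 : Integrable g4 := by
    have heq : g4 =ᵐ[volume] fun ω => c⁻¹ * NPA k ω - g1 ω - g2 ω - g3 ω := by
      filter_upwards [hdecomp] with ω h
      rw [h]
      field_simp
      ring
    exact (((((hint k).const_mul c⁻¹).sub hint_g1).sub hint_g2).sub hint_g3).congr heq.symm
  have hg1v : ∫ ω, g1 ω = (K : ℂ) * (p₁ : ℂ) := by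
    have h1 : ∫ ω, g1 ω = ∑ n : Fin K, ∫ ω, ((Complex.normSq (Y n ω) : ℝ) : ℂ) :=
      integral_finset_sum _ fun n _ => (hIntNormSq n).ofReal
    rw [h1]
    have : ∀ n : Fin K, ∫ ω, ((Complex.normSq (Y n ω) : ℝ) : ℂ) = (p₁ : ℂ) := fun n => by
      rw [show ∫ ω, ((Complex.normSq (Y n ω) : ℝ) : ℂ)
          = ((∫ ω, Complex.normSq (Y n ω) : ℝ) : ℂ) from integral_ofReal, hp₁Y n]
    rw [Finset.sum_congr rfl fun n _ => this n]
    simp [Finset.card_univ, nsmul_eq_mul]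
  have hg2v : ∫ ω, g2 ω = ((K - 1 : ℕ) : ℂ) * (p₁ : ℂ) := by
    have h1 : ∫ ω, g2 ω = ∑ m ∈ E0, ∫ ω, ((Complex.normSq (Y (k - m) ω) : ℝ) : ℂ) :=
      integral_finset_sum _ fun m _ => (hIntNormSq (k - m)).ofReal
    rw [h1]
    have : ∀ m : Fin K, ∫ ω, ((Complex.normSq (Y (k - m) ω) : ℝ) : ℂ) = (p₁ : ℂ) := fun m => by
      rw [show ∫ ω, ((Complex.normSq (Y (k - m) ω) : ℝ) : ℂ)
          = ((∫ ω, Complex.normSq (Y (k - m) ω) : ℝ) : ℂ) from integral_ofReal, hp₁Y (k - m)]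
    rw [Finset.sum_congr rfl fun m _ => this m]
    rw [Finset.sum_const, hE0, Finset.card_erase_of_mem (Finset.mem_univ _), Finset.card_univ,
      Fintype.card_fin, nsmul_eq_mul]
  rw [integral_congr_ae hdecomp]
  rw [integral_const_mul]
  have h12 : Integrable (fun ω => g1 ω + g2 ω) := hint_g1.add hint_g2
  have h123 : Integrable (fun ω => g1 ω + g2 ω + g3 ω) := h12.add hint_g3
  rw [integral_add h123 hint_g4, integral_add h12 hint_g3, integral_add hint_g1 hint_g2]
  rw [hg1v, hg2v, hg3_0, hg4_0]
  have hK1 : ((K - 1 : ℕ) : ℂ) = (K : ℂ) - 1 := by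
    have : (1 : ℕ) ≤ K := Nat.one_le_iff_ne_zero.mpr (NeZero.ne K)
    push_cast [this]
    ring
  rw [hK1, hc]
  rw [Complex.ofReal_div, Complex.ofReal_mul, Complex.ofReal_mul, Complex.ofReal_sub,
    Complex.ofReal_mul, Complex.ofReal_natCast, Complex.ofReal_ofNat, Complex.ofReal_one]
  field_simp
  ring
end
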